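/- arXiv:nlin/0601001 — 2 statements merged into one kernel-verified Lean document; each statement's English description precedes it below -/
import Mathlib

section
/- Let A be a WNA algebra with fixed f, and δ a derivation of A with δ(A) ⊆ A'. Then δ is a derivation with respect to every derived product ∘ₙ, n ≥ 1: δ(a ∘ₙ b) = δ(a) ∘ₙ b + a ∘ₙ δ(b). (Here δ is also applied to f inside the recursion, i.e. the products are defined with the same f and the claim uses δ(f) ∈ A'.) -/
def nucleus (A : Type*) [NonUnitalNonAssocRing A] : Set A :=
  {b | ∀ a c : A, a * b * c = a * (b * c)}

/-- Derived products: `circ f (n-1) a b` is `a ∘ₙ b`. -/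
def circ {A : Type*} [NonUnitalNonAssocRing A] (f : A) : ℕ → A → A → A
  | 0, a, b => a * b
  | n+1, a, b => a * circ f n f b - circ f n (a * f) b

lemma circ_add_left {A : Type*} [NonUnitalNonAssocRing A] (f : A) :
    ∀ (n : ℕ) (x y b : A), circ f n (x + y) b = circ f n x b + circ f n y b := by
  intro n
  induction n with
  | zero => intro x y b; simp [circ, add_mul]
  | succ n ih =>
    intro x y b
    simp only [circ, add_mul, ih]
    abel

lemma circ_nucleus {A : Type*} [NonUnitalNonAssocRing A]
    (hW : ∀ a b c d : A, a * (b * c) * d = a * (b * c * d)) (f : A) :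
    ∀ (n : ℕ) (d : A), d ∈ nucleus A → ∀ (a b : A),
      a * circ f n d b = circ f n (a * d) b := by
  intro n
  induction n with
  | zero => intro d hd a b; exact (hd a b).symm ▸ (hd a b)
  | succ n ih =>
    intro d hd a b
    have hdf : d * f ∈ nucleus A := fun x y => hW x d f y
    simp only [circ, mul_sub]
    rw [ih (d * f) hdf a b, ← hd a (circ f n f b), ← hd a f]

/-- A derivation `δ` of a WNA algebra with `δ(A) ⊆ A'` is a derivation with respect
to every derived product `∘ₙ`. -/
theorem derivation_of_circ {A : Type*} [NonUnitalNonAssocRing A]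
    (hW : ∀ a b c d : A, a * (b * c) * d = a * (b * c * d)) (f : A)
    (δ : A →+ A)
    (hder : ∀ x y : A, δ (x * y) = δ x * y + x * δ y)
    (him : ∀ x : A, δ x ∈ nucleus A) :
    ∀ (n : ℕ) (a b : A),
      δ (circ f n a b) = circ f n (δ a) b + circ f n a (δ b) := by
  intro n
  induction n with
  | zero => intro a b; exact hder a b
  | succ n ih =>
    intro a b
    simp only [circ, map_sub, hder, ih, circ_add_left, mul_add]
    rw [circ_nucleus hW f n (δ f) (him f) a b]
    abel
end

section
/- Let A(f) be a δ-compatible WNA algebra and define H(λ) := exp(Σ_{n≥1} (λⁿ/n) δₙ) as a formal power series of operators, and E(λ) := exp(−Σ_{n≥1} ((−λ)ⁿ/n) δₙ). Then E(−λ)H(λ) = id, and H(λ)(f) = Σ_{n≥0} λⁿ hₙ, E(λ)(f) = Σ_{n≥0} λⁿ eₙ, where hₙ = L_f^n(f), eₙ = R_f^n(f). Equivalently, hₙ = χₙ(δ₁, δ₂/2, δ₃/3, …)(f) where χₙ are the elementary Schur polynomials. -/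
/-- `hₖ = L_f^k(f)`. -/
def hpow {A : Type*} [NonUnitalNonAssocRing A] (f : A) (k : ℕ) : A :=
  (fun x => f * x)^[k] f

/-- `eₖ = R_f^k(f)`. -/
def epow {A : Type*} [NonUnitalNonAssocRing A] (f : A) (k : ℕ) : A :=
  (fun x => x * f)^[k] f

/-- `pₖ = f ∘ₖ f` (for `k ≥ 1`). -/
def pprod {A : Type*} [NonUnitalNonAssocRing A] (f : A) (k : ℕ) : A :=
  circ f (k - 1) f f

/-!
With `S j m = Σ_{i<m} L_f^i (f ∘_{j+1} h_{m-1-i})` (`circSumLeft`), every derivation `δ`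
with `δ f = f ∘_{j+1} f` satisfies `δ hₘ = S j (m+1) - S (j+1) m`; the one non-formal input
is `(f ∘_{j+1} f) b = f ∘_{j+1} (f b) - f ∘_{j+2} b`, which is where the WNA identity
enters. Hence `Σ_k δ_k h_{n-k}` telescopes to `S 0 n = n hₙ`, so `hₙ` obeys the recursion
that determines `Hₙ(f)`; the same works for `eₙ` with right multiplication and signs.

For `E(-λ) H(λ) = id`, pass to power series over `End A`: with `P = Σ δ_{k+1} λᵏ` one has
`H' = P H` and `E(-λ)' = -P E(-λ)`. Uniqueness for this linear ODE shows that every `δₘ`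
commutes with the coefficients of `E(-λ)`, so `(E(-λ) H(λ))' = 0`; the constant term is `id`.
-/

open Finset

section DerivedProducts

variable {A : Type*} [NonUnitalNonAssocRing A]

theorem hpow_succ (f : A) (m : ℕ) : hpow f (m + 1) = f * hpow f m :=
  Function.iterate_succ_apply' _ m f

theorem epow_succ (f : A) (m : ℕ) : epow f (m + 1) = epow f m * f :=
  Function.iterate_succ_apply' _ m f

theorem circ_succ (f : A) (n : ℕ) (a b : A) :
    circ f (n + 1) a b = a * circ f n f b - circ f n (a * f) b := rfl

theorem circ_mul_assoc_middle (hW : ∀ a b c d : A, a * (b * c) * d = a * (b * c * d))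
    (f : A) (n : ℕ) (a b c d : A) : a * circ f n c d * b = a * (circ f n c d * b) := by
  induction n generalizing c with
  | zero => exact hW a c d b
  | succ n ih => rw [circ_succ, mul_sub, sub_mul, sub_mul, mul_sub, hW, ih]

theorem circ_mul_eq_add_circ_succ (hW : ∀ a b c d : A, a * (b * c) * d = a * (b * c * d))
    (f : A) (n : ℕ) (a b : A) :
    circ f n a (f * b) = circ f n a f * b + circ f (n + 1) a b := by
  induction n generalizing a with
  | zero => simp only [circ, add_sub_cancel]
  | succ n ih =>
    rw [circ_succ, circ_succ, circ_succ, ih, ih, mul_add, ← circ_mul_assoc_middle hW, sub_mul]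
    abel

def circSumLeft (f : A) (j : ℕ) : ℕ → A
  | 0 => 0
  | m + 1 => circ f j f (hpow f m) + f * circSumLeft f j m

def circSumRight (f : A) (j : ℕ) : ℕ → A
  | 0 => 0
  | m + 1 => circ f j (epow f m) f + circSumRight f j m * f

theorem circSumLeft_zero_eq_nsmul_hpow (f : A) (m : ℕ) :
    circSumLeft f 0 m = m • hpow f m := by
  induction m with
  | zero => simp [circSumLeft]
  | succ m ih =>
    rw [circSumLeft, ih, mul_smul_comm, ← hpow_succ, circ, ← hpow_succ, succ_nsmul']

theorem circSumRight_zero_eq_nsmul_epow (f : A) (m : ℕ) :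
    circSumRight f 0 m = m • epow f m := by
  induction m with
  | zero => simp [circSumRight]
  | succ m ih =>
    rw [circSumRight, ih, smul_mul_assoc, ← epow_succ, circ, ← epow_succ, succ_nsmul']

theorem apply_hpow_eq_circSumLeft_sub (hW : ∀ a b c d : A, a * (b * c) * d = a * (b * c * d))
    (f : A) (j : ℕ) (D : A → A) (hD : ∀ x y, D (x * y) = D x * y + x * D y)
    (hDf : D f = circ f j f f) (m : ℕ) :
    D (hpow f m) = circSumLeft f j (m + 1) - circSumLeft f (j + 1) m := by
  induction m with
  | zero => simp [circSumLeft, hpow, hDf]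
  | succ m ih =>
    have hcirc : circ f j f f * hpow f m
        = circ f j f (hpow f (m + 1)) - circ f (j + 1) f (hpow f m) := by
      rw [hpow_succ, circ_mul_eq_add_circ_succ hW]; abel
    rw [hpow_succ, hD, hDf, ih, hcirc, circSumLeft.eq_2 f j (m + 1),
      circSumLeft.eq_2 f (j + 1) m, mul_sub]
    abel

theorem apply_epow_eq_circSumRight_add (f : A) (j : ℕ) (D : A → A)
    (hD : ∀ x y, D (x * y) = D x * y + x * D y) (hDf : D f = circ f j f f) (m : ℕ) :
    D (epow f m) = circSumRight f j (m + 1) + circSumRight f (j + 1) m := by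
  induction m with
  | zero => simp [circSumRight, epow, hDf]
  | succ m ih =>
    have hcirc : epow f m * circ f j f f
        = circ f j (epow f (m + 1)) f + circ f (j + 1) (epow f m) f := by
      rw [circ_succ, epow_succ]; abel
    rw [epow_succ, hD, hDf, ih, hcirc, circSumRight.eq_2 f j (m + 1),
      circSumRight.eq_2 f (j + 1) m, add_mul]
    abel

theorem sum_Icc_one_eq_sum_range {M : Type*} [AddCommMonoid M] (g : ℕ → M) (n : ℕ) :
    ∑ k ∈ Icc 1 n, g k = ∑ i ∈ range n, g (i + 1) := by
  rw [range_eq_Ico, sum_Ico_add' g 0 n 1]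
  rfl

theorem sum_Icc_apply_hpow_eq_nsmul (hW : ∀ a b c d : A, a * (b * c) * d = a * (b * c * d))
    (f : A) (δ : ℕ → A → A)
    (hder : ∀ k, 1 ≤ k → ∀ x y : A, δ k (x * y) = δ k x * y + x * δ k y)
    (hval : ∀ k, 1 ≤ k → δ k f = pprod f k) (n : ℕ) :
    ∑ k ∈ Icc 1 (n + 1), δ k (hpow f (n + 1 - k)) = (n + 1) • hpow f (n + 1) := by
  have key (j m : ℕ) := apply_hpow_eq_circSumLeft_sub hW f j (δ (j + 1))
    (hder (j + 1) j.succ_pos) (hval (j + 1) j.succ_pos) m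
  calc ∑ k ∈ Icc 1 (n + 1), δ k (hpow f (n + 1 - k))
      = ∑ j ∈ range (n + 1),
          (circSumLeft f j (n + 1 - j) - circSumLeft f (j + 1) (n + 1 - (j + 1))) := by
        rw [sum_Icc_one_eq_sum_range]
        refine sum_congr rfl fun j hj => ?_
        rw [key, Nat.add_sub_add_right, Nat.sub_add_comm (mem_range_succ_iff.mp hj)]
    _ = (n + 1) • hpow f (n + 1) := by
        rw [sum_range_sub', circSumLeft_zero_eq_nsmul_hpow, Nat.sub_self, circSumLeft,
          sub_zero, Nat.sub_zero]

theorem sum_Icc_neg_one_pow_smul_apply_epow_eq_nsmul (f : A) (δ : ℕ → A → A)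
    (hder : ∀ k, 1 ≤ k → ∀ x y : A, δ k (x * y) = δ k x * y + x * δ k y)
    (hval : ∀ k, 1 ≤ k → δ k f = pprod f k) (n : ℕ) :
    ∑ k ∈ Icc 1 (n + 1), ((-1 : ℤ) ^ (k + 1)) • δ k (epow f (n + 1 - k))
      = (n + 1) • epow f (n + 1) := by
  have key (j m : ℕ) := apply_epow_eq_circSumRight_add f j (δ (j + 1))
    (hder (j + 1) j.succ_pos) (hval (j + 1) j.succ_pos) m
  calc ∑ k ∈ Icc 1 (n + 1), ((-1 : ℤ) ^ (k + 1)) • δ k (epow f (n + 1 - k))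
      = ∑ j ∈ range (n + 1), ((-1 : ℤ) ^ j • circSumRight f j (n + 1 - j)
          - (-1 : ℤ) ^ (j + 1) • circSumRight f (j + 1) (n + 1 - (j + 1))) := by
        rw [sum_Icc_one_eq_sum_range]
        refine sum_congr rfl fun j hj => ?_
        rw [key, Nat.add_sub_add_right, Nat.sub_add_comm (mem_range_succ_iff.mp hj)]
        simp only [pow_succ, mul_neg_one, neg_neg, neg_smul, sub_neg_eq_add, smul_add]
    _ = (n + 1) • epow f (n + 1) := by
        rw [sum_range_sub', circSumRight_zero_eq_nsmul_epow, Nat.sub_self, circSumRight,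
          smul_zero, sub_zero, pow_zero, one_smul, Nat.sub_zero]

end DerivedProducts

theorem eq_of_succ_nsmul_eq_sum_Icc {M : Type*} [AddCommMonoid M] [IsAddTorsionFree M]
    (g : ℕ → M → M) {a b : ℕ → M} (h0 : a 0 = b 0)
    (ha : ∀ n, (n + 1) • a (n + 1) = ∑ k ∈ Icc 1 (n + 1), g k (a (n + 1 - k)))
    (hb : ∀ n, (n + 1) • b (n + 1) = ∑ k ∈ Icc 1 (n + 1), g k (b (n + 1 - k))) (n : ℕ) :
    a n = b n := by
  induction n using Nat.strong_induction_on with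
  | _ n ih =>
    cases n with
    | zero => exact h0
    | succ n =>
      refine nsmul_right_injective n.succ_ne_zero ?_
      refine (ha n).trans (Eq.trans (sum_congr rfl fun k hk => ?_) (hb n).symm)
      rw [ih (n + 1 - k) (by have := (mem_Icc.mp hk).1; omega)]

instance LinearMap.instIsAddTorsionFree {R M N : Type*} [Semiring R] [AddCommMonoid M]
    [AddCommMonoid N] [Module R M] [Module R N] [IsAddTorsionFree N] :
    IsAddTorsionFree (M →ₗ[R] N) where
  nsmul_right_injective _ hn _ _ h :=
    LinearMap.ext fun x => nsmul_right_injective hn (LinearMap.congr_fun h x)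

namespace PowerSeries

section Semiring

variable {R : Type*} [Semiring R]

noncomputable def formalDeriv (φ : R⟦X⟧) : R⟦X⟧ :=
  mk fun n => (n + 1) • coeff (n + 1) φ

@[simp]
theorem coeff_formalDeriv (φ : R⟦X⟧) (n : ℕ) :
    coeff n (formalDeriv φ) = (n + 1) • coeff (n + 1) φ :=
  coeff_mk _ _

@[simp]
theorem formalDeriv_C (a : R) : formalDeriv (C a) = 0 := by
  ext n; simp

@[simp]
theorem formalDeriv_one : formalDeriv (1 : R⟦X⟧) = 0 := by
  simpa using formalDeriv_C (1 : R)

theorem formalDeriv_mul (φ ψ : R⟦X⟧) :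
    formalDeriv (φ * ψ) = formalDeriv φ * ψ + φ * formalDeriv ψ := by
  ext n
  have hsplit : (n + 1) • coeff (n + 1) (φ * ψ) =
      ∑ p ∈ antidiagonal (n + 1), p.1 • (coeff p.1 φ * coeff p.2 ψ) +
        ∑ p ∈ antidiagonal (n + 1), p.2 • (coeff p.1 φ * coeff p.2 ψ) := by
    rw [coeff_mul, smul_sum, ← sum_add_distrib]
    refine sum_congr rfl fun p hp => ?_
    rw [← add_nsmul, mem_antidiagonal.mp hp]
  rw [coeff_formalDeriv, hsplit, Nat.sum_antidiagonal_succ, Nat.sum_antidiagonal_succ',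
    map_add, coeff_mul, coeff_mul]
  simp only [coeff_formalDeriv, smul_mul_assoc, mul_smul_comm, zero_smul, zero_add]

theorem formalDeriv_mk_of_sum_Icc {a p : ℕ → R}
    (h : ∀ n, (n + 1) • a (n + 1) = ∑ k ∈ Icc 1 (n + 1), p k * a (n + 1 - k)) :
    formalDeriv (mk a) = mk (fun n => p (n + 1)) * mk a := by
  ext n
  rw [coeff_formalDeriv, coeff_mk, h, coeff_mul, Nat.sum_antidiagonal_eq_sum_range_succ_mk,
    sum_Icc_one_eq_sum_range]
  simp only [coeff_mk, Nat.add_sub_add_right]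

theorem eq_of_formalDeriv_eq_mul [IsAddTorsionFree R] {Q φ ψ : R⟦X⟧}
    (hφ : formalDeriv φ = Q * φ) (hψ : formalDeriv ψ = Q * ψ)
    (h0 : constantCoeff φ = constantCoeff ψ) : φ = ψ := by
  ext n
  induction n using Nat.strong_induction_on with
  | _ n ih =>
    cases n with
    | zero => simpa using h0
    | succ n =>
      refine nsmul_right_injective n.succ_ne_zero ?_
      dsimp only
      rw [← coeff_formalDeriv, ← coeff_formalDeriv, hφ, hψ, coeff_mul, coeff_mul]
      refine sum_congr rfl fun p hp => ?_
      rw [ih p.2 (Nat.antidiagonal.snd_lt hp)]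

theorem commute_of_forall_commute_coeff {φ ψ : R⟦X⟧}
    (h : ∀ i j, Commute (coeff i φ) (coeff j ψ)) : Commute φ ψ := by
  ext n
  rw [coeff_mul, coeff_mul, ← Nat.sum_antidiagonal_swap]
  exact sum_congr rfl fun p _ => (h p.2 p.1).eq

theorem commute_coeff_of_formalDeriv_eq_mul [IsAddTorsionFree R] {a : R} {Q φ : R⟦X⟧}
    (hφ : formalDeriv φ = Q * φ) (hQ : ∀ n, Commute a (coeff n Q))
    (h0 : Commute a (constantCoeff φ)) (n : ℕ) : Commute a (coeff n φ) := by
  have hCQ : Commute (C a) Q := commute_of_forall_commute_coeff fun i j => by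
    rw [coeff_C]
    split_ifs
    exacts [hQ j, Commute.zero_left _]
  have hCφ : C a * φ = φ * C a := by
    refine eq_of_formalDeriv_eq_mul (Q := Q) ?_ ?_ (by simpa using h0.eq)
    · rw [formalDeriv_mul, formalDeriv_C, zero_mul, zero_add, hφ, ← mul_assoc, hCQ.eq,
        mul_assoc]
    · rw [formalDeriv_mul, formalDeriv_C, mul_zero, add_zero, hφ, mul_assoc]
  show a * coeff n φ = coeff n φ * a
  simpa only [coeff_C_mul, coeff_mul_C] using congrArg (coeff n) hCφ

end Semiring

section Ring

variable {R : Type*} [Ring R]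

theorem mul_eq_one_of_formalDeriv_eq_neg_mul [IsAddTorsionFree R] {Q φ ψ : R⟦X⟧}
    (hφ : formalDeriv φ = -Q * φ) (hψ : formalDeriv ψ = Q * ψ) (hQφ : Commute Q φ)
    (h0 : constantCoeff φ * constantCoeff ψ = 1) : φ * ψ = 1 := by
  refine eq_of_formalDeriv_eq_mul (Q := 0) ?_ (by simp) (by simpa using h0)
  rw [formalDeriv_mul, hφ, hψ, ← mul_assoc, ← hQφ.eq, neg_mul, neg_mul, neg_add_cancel,
    zero_mul]

end Ring

end PowerSeries

open PowerSeries in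
theorem sum_range_neg_one_pow_smul_mul_eq_zero {R : Type*} [Ring R] [IsAddTorsionFree R]
    {D H E : ℕ → R} (hD : ∀ m n, Commute (D m) (D n)) (hH0 : H 0 = 1) (hE0 : E 0 = 1)
    (hHrec : ∀ n, (n + 1) • H (n + 1) = ∑ k ∈ Icc 1 (n + 1), D k * H (n + 1 - k))
    (hErec : ∀ n, (n + 1) • E (n + 1)
      = ∑ k ∈ Icc 1 (n + 1), ((-1 : ℤ) ^ (k + 1)) • (D k * E (n + 1 - k)))
    {n : ℕ} (hn : n ≠ 0) :
    ∑ k ∈ range (n + 1), ((-1 : ℤ) ^ k) • (E k * H (n - k)) = 0 := by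
  set P : R⟦X⟧ := mk fun n => D (n + 1)
  set Eneg : R⟦X⟧ := mk fun n => (-1 : ℤ) ^ n • E n
  have hH : formalDeriv (mk H) = P * mk H := formalDeriv_mk_of_sum_Icc hHrec
  have hE : formalDeriv Eneg = -P * Eneg := by
    have : -P = mk fun n => -D (n + 1) := by ext; simp [P]
    rw [this]
    refine formalDeriv_mk_of_sum_Icc (p := fun k => -D k) fun n => ?_
    rw [smul_comm, hErec, smul_sum]
    refine sum_congr rfl fun k hk => ?_
    obtain ⟨m, hm⟩ := Nat.exists_eq_add_of_le (mem_Icc.mp hk).2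
    have hsign : (-1 : ℤ) ^ (n + 1) * (-1) ^ (k + 1) = -(-1) ^ (n + 1 - k) := by
      rw [hm, Nat.add_sub_cancel_left, pow_add, pow_succ, mul_mul_mul_comm, ← mul_pow]
      simp
    rw [smul_smul, hsign, neg_smul, neg_mul, mul_smul_comm]
  have hPE : Commute P Eneg := commute_of_forall_commute_coeff fun i j => by
    refine commute_coeff_of_formalDeriv_eq_mul hE (fun m => ?_) ?_ j
    · simpa [P] using (hD (i + 1) (m + 1)).neg_right
    · simp [Eneg, hE0]
  have hEH : Eneg * mk H = 1 :=
    mul_eq_one_of_formalDeriv_eq_neg_mul hE hH hPE (by simp [Eneg, hE0, hH0])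
  simpa [coeff_mul, Nat.sum_antidiagonal_eq_sum_range_succ_mk, hn, Eneg, mul_assoc]
    using congrArg (coeff n) hEH

/-- `H` and `E` stand for the coefficients of `H(λ)` and `E(λ)`, which over ℚ are determined
by `H₀ = E₀ = id` and the recursions `hHrec`, `hErec`; the first conjunct is `E(-λ)H(λ) = id`
read off coefficientwise. -/
theorem exp_generating_functions {A : Type*} [NonUnitalNonAssocRing A] [Module ℚ A]
    (hW : ∀ a b c d : A, a * (b * c) * d = a * (b * c * d)) (f : A)
    (δ : ℕ → A →+ A)
    (hder : ∀ k, 1 ≤ k → ∀ x y : A, δ k (x * y) = δ k x * y + x * δ k y)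
    (hval : ∀ k, 1 ≤ k → δ k f = pprod f k)
    (hcomm : ∀ m n, ∀ x : A, δ m (δ n x) = δ n (δ m x))
    (H E : ℕ → A →+ A)
    (hH0 : ∀ x : A, H 0 x = x) (hE0 : ∀ x : A, E 0 x = x)
    (hHrec : ∀ (n : ℕ) (x : A),
      (n + 1) • H (n+1) x = ∑ k ∈ Finset.Icc 1 (n+1), δ k (H (n + 1 - k) x))
    (hErec : ∀ (n : ℕ) (x : A),
      (n + 1) • E (n+1) x
        = ∑ k ∈ Finset.Icc 1 (n+1), ((-1 : ℤ)^(k+1)) • δ k (E (n + 1 - k) x)) :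
    (∀ n : ℕ, 1 ≤ n → ∀ x : A,
      ∑ k ∈ Finset.range (n+1), ((-1 : ℤ)^k) • E k (H (n - k) x) = 0) ∧
    (∀ n : ℕ, H n f = hpow f n) ∧
    (∀ n : ℕ, E n f = epow f n) := by
  have := IsAddTorsionFree.of_module_rat A
  refine ⟨fun n hn x => ?_, fun n => ?_, fun n => ?_⟩
  · have hsum := sum_range_neg_one_pow_smul_mul_eq_zero
      (D := fun k => (δ k).toIntLinearMap) (H := fun k => (H k).toIntLinearMap)
      (E := fun k => (E k).toIntLinearMap)
      (fun m k => LinearMap.ext (hcomm m k)) (LinearMap.ext hH0) (LinearMap.ext hE0)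
      (fun n => by ext x; simpa only [LinearMap.smul_apply, LinearMap.sum_apply,
        Module.End.mul_apply, AddMonoidHom.coe_toIntLinearMap] using hHrec n x)
      (fun n => by ext x; simpa only [LinearMap.smul_apply, LinearMap.sum_apply,
        Module.End.mul_apply, AddMonoidHom.coe_toIntLinearMap] using hErec n x)
      (Nat.one_le_iff_ne_zero.mp hn)
    simpa only [LinearMap.smul_apply, LinearMap.sum_apply, LinearMap.zero_apply,
      Module.End.mul_apply, AddMonoidHom.coe_toIntLinearMap] using LinearMap.congr_fun hsum x
  · exact eq_of_succ_nsmul_eq_sum_Icc (fun k y => δ k y) (a := fun n => H n f) (hH0 f)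
      (fun n => hHrec n f)
      (fun n => (sum_Icc_apply_hpow_eq_nsmul hW f (fun k => δ k) hder hval n).symm) n
  · exact eq_of_succ_nsmul_eq_sum_Icc (fun k y => ((-1 : ℤ) ^ (k + 1)) • δ k y)
      (a := fun n => E n f) (hE0 f) (fun n => hErec n f)
      (fun n =>
        (sum_Icc_neg_one_pow_smul_apply_epow_eq_nsmul f (fun k => δ k) hder hval n).symm) n
end
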